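/- The number (3√3-5)/2 is a root of the discriminant (with respect to B*) of the polynomial 16z^2(B*)^3 - (16z^4+120z^3-48z^2-8z)(B*)^2 + (4z^6+76z^5+121z^4-244z^3+118z^2-20z+1)B* - 8z^7-76z^6+134z^5-77z^4+17z^3-z^2, and it is the smallest positive such root. Moreover 1/((3√3-5)/2) = 5 + 3√3. -/
import Mathlib


/-- The discriminant (with respect to `B*`) of the cubic
`16z^2 (B*)^3 - (16z^4+120z^3-48z^2-8z)(B*)^2 + (4z^6+76z^5+121z^4-244z^3+118z^2-20z+1)B*`
`- 8z^7-76z^6+134z^5-77z^4+17z^3-z^2`, computed via the formula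
`b^2c^2 - 4ac^3 - 4b^3d - 27a^2d^2 + 18abcd`. -/
noncomputable def disc8 (z : ℝ) : ℝ :=
  let a := 16 * z ^ 2
  let b := -(16 * z ^ 4 + 120 * z ^ 3 - 48 * z ^ 2 - 8 * z)
  let c := 4 * z ^ 6 + 76 * z ^ 5 + 121 * z ^ 4 - 244 * z ^ 3 + 118 * z ^ 2 - 20 * z + 1
  let d := -8 * z ^ 7 - 76 * z ^ 6 + 134 * z ^ 5 - 77 * z ^ 4 + 17 * z ^ 3 - z ^ 2
  b ^ 2 * c ^ 2 - 4 * a * c ^ 3 - 4 * b ^ 3 * d - 27 * a ^ 2 * d ^ 2 + 18 * a * b * c * d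

lemma disc8_factor (z : ℝ) :
    disc8 z = 256 * z ^ 3 * (2 * z ^ 2 + 10 * z - 1) ^ 3 * (2 * z - 1) ^ 6 * (z - 2) ^ 3 := by
  simp only [disc8]
  ring

lemma sqrt3_sq : Real.sqrt 3 ^ 2 = 3 := Real.sq_sqrt (by norm_num)

lemma sqrt3_gt : (5 : ℝ) < 3 * Real.sqrt 3 := by
  nlinarith [sqrt3_sq, Real.sqrt_nonneg 3]

lemma r_root : 2 * ((3 * Real.sqrt 3 - 5) / 2) ^ 2 + 10 * ((3 * Real.sqrt 3 - 5) / 2) - 1 = 0 := by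
  nlinarith [sqrt3_sq]

/-- `(3√3-5)/2` is the smallest positive root of the discriminant of the minimal
polynomial of 2-connected simple cubic planar maps, and its reciprocal is `5 + 3√3`. -/
theorem dominant_singularity_two_connected_simple :
    disc8 ((3 * Real.sqrt 3 - 5) / 2) = 0 ∧
    (∀ z : ℝ, 0 < z → disc8 z = 0 → (3 * Real.sqrt 3 - 5) / 2 ≤ z) ∧
    ((3 * Real.sqrt 3 - 5) / 2)⁻¹ = 5 + 3 * Real.sqrt 3 := by
  have hs := sqrt3_sq
  have hg := sqrt3_gt
  set r : ℝ := (3 * Real.sqrt 3 - 5) / 2 with hr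
  have hrpos : 0 < r := by rw [hr]; linarith
  have hrroot := r_root
  refine ⟨?_, ?_, ?_⟩
  · rw [disc8_factor, hrroot]; ring
  · intro z hz hD
    rw [disc8_factor] at hD
    have hz3 : z ^ 3 ≠ 0 := pow_ne_zero _ (ne_of_gt hz)
    rcases mul_eq_zero.1 hD with h | h3
    · rcases mul_eq_zero.1 h with h | h6
      · rcases mul_eq_zero.1 h with h | hq
        · rcases mul_eq_zero.1 h with h | h
          · norm_num at h
          · exact absurd h hz3
        · -- (2z²+10z-1)³ = 0
          have hq0 : 2 * z ^ 2 + 10 * z - 1 = 0 := by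
            have := pow_eq_zero_iff (n := 3) (by norm_num) |>.1 hq
            exact this
          -- (z - r)(2z + 2r + 10) = 0
          have key : (z - r) * (2 * z + 2 * r + 10) = 0 := by
            nlinarith [hq0, hrroot]
          rcases mul_eq_zero.1 key with h | h
          · linarith [sub_eq_zero.1 h]
          · linarith
      · have : 2 * z - 1 = 0 := pow_eq_zero_iff (n := 6) (by norm_num) |>.1 h6
        have hz2 : z = 1 / 2 := by linarith
        rw [hr, hz2]
        nlinarith [hs, Real.sqrt_nonneg 3]
    · have : z - 2 = 0 := pow_eq_zero_iff (n := 3) (by norm_num) |>.1 h3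
      have hz2 : z = 2 := by linarith
      rw [hr, hz2]
      nlinarith [hs, Real.sqrt_nonneg 3]
  · have hmul : r * (5 + 3 * Real.sqrt 3) = 1 := by rw [hr]; nlinarith [hs]
    field_simp [ne_of_gt hrpos] at hmul ⊢
    linarith [hmul]
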